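/- arXiv:1307.3460 — 5 statements merged into one kernel-verified Lean document; each statement's English description precedes it below -/
import Mathlib

section
/- Let R : [0,T]² → ℝ be symmetric with R(s,t) = E[X_s X_t] for a centered Gaussian process X, and suppose the mixed (1,ρ)-variation V_{1,ρ}(R;[s,t]²) is finite for all subintervals. Then every Cameron–Martin path h (i.e. h_t = E[Z X_t] with Z in the L²-closure of span{X_t}) satisfies ‖h‖_{q-var;[s,t]} ≤ ‖h‖_H · √(V_{1,ρ}(R;[s,t]²)) where q = 1/(1/(2ρ) + 1/2). -/
/-!
Duality. On a dissection, the increments of `h` are `a_j = E[Z ΔX_j]`. Testing `Z` against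
`Y = Σ β_j ΔX_j` with `β_j = sign(a_j) |a_j|^(q-1)` gives `Σ |a_j|^q = E[Z Y] ≤ ‖Z‖₂ ‖Y‖₂`.
By the Schur test, `E[Y²] = Σ β_j β_k E[ΔX_j ΔX_k]` is at most `Σ β_j² r_j` with `r_j` the
`j`-th column sum of `|E[ΔX_i ΔX_j]|`, and Hölder's inequality in `j` bounds this by
`(Σ |a_j|^q)^(1-1/ρ)` times the mixed `(1,ρ)`-variation of `R`; the choice of `q` is exactly
what makes `β_j²` the right power of `|a_j|^q`. Dividing out gives the `q`-variation bound.
-/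

open MeasureTheory ProbabilityTheory Finset

section SignedPower

variable {p : ℝ} (a : ℝ)

lemma sign_mul_abs_rpow_sub_one_mul_self (hp : p ≠ 0) :
    Real.sign a * |a| ^ (p - 1) * a = |a| ^ p := by
  rcases eq_or_ne a 0 with rfl | ha
  · simp [Real.zero_rpow hp]
  · have hsign : Real.sign a * a = |a| := by
      rcases lt_or_gt_of_ne ha with h | h
      · rw [Real.sign_of_neg h, abs_of_neg h]; ring
      · rw [Real.sign_of_pos h, abs_of_pos h]; ring
    rw [mul_right_comm, hsign, mul_comm, ← Real.rpow_add_one (abs_ne_zero.2 ha), sub_add_cancel]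

lemma sq_sign_mul_abs_rpow_sub_one_le :
    (Real.sign a * |a| ^ (p - 1)) ^ 2 ≤ |a| ^ (2 * (p - 1)) := by
  have hsign : |Real.sign a| ≤ 1 := by
    rcases Real.sign_apply_eq a with h | h | h <;> simp [h]
  rw [mul_comm 2, Real.rpow_mul (abs_nonneg a), Real.rpow_two, ← sq_abs, abs_mul,
    abs_of_nonneg (Real.rpow_nonneg (abs_nonneg a) _)]
  exact pow_le_pow_left₀ (by positivity) (mul_le_of_le_one_left (by positivity) hsign) 2

end SignedPower

lemma sum_mul_mul_le_sum_sq_mul_sum_abs {ι : Type*} [Fintype ι] (β : ι → ℝ) {G : ι → ι → ℝ}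
    (hG : ∀ i j, G i j = G j i) :
    ∑ j, ∑ k, β j * β k * G j k ≤ ∑ j, β j ^ 2 * ∑ i, |G i j| := by
  have hterm : ∀ j k, β j * β k * G j k ≤ (β j ^ 2 * |G k j| + β k ^ 2 * |G j k|) / 2 := by
    intro j k
    rw [hG k j]
    calc β j * β k * G j k ≤ |β j| * |β k| * |G j k| := by
          rw [← abs_mul, ← abs_mul]; exact le_abs_self _
      _ ≤ (β j ^ 2 * |G j k| + β k ^ 2 * |G j k|) / 2 := by
          nlinarith [sq_abs (β j), sq_abs (β k), two_mul_le_add_sq |β j| |β k|, abs_nonneg (G j k)]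
  have hswap : ∑ j, ∑ k, β k ^ 2 * |G j k| = ∑ j, ∑ k, β j ^ 2 * |G k j| := sum_comm
  calc ∑ j, ∑ k, β j * β k * G j k
      ≤ ∑ j, ∑ k, (β j ^ 2 * |G k j| + β k ^ 2 * |G j k|) / 2 :=
        sum_le_sum fun j _ => sum_le_sum fun k _ => hterm j k
    _ = ∑ j, β j ^ 2 * ∑ i, |G i j| := by
        simp only [← sum_div, sum_add_distrib, hswap, mul_sum]; ring

lemma sum_rpow_one_sub_inv_mul_le {ι : Type*} (s : Finset ι) {ρ : ℝ} (hρ : 1 ≤ ρ) {u r : ι → ℝ}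
    (hu : ∀ i ∈ s, 0 ≤ u i) (hr : ∀ i ∈ s, 0 ≤ r i) :
    ∑ i ∈ s, u i ^ (1 - ρ⁻¹) * r i ≤ (∑ i ∈ s, u i) ^ (1 - ρ⁻¹) * (∑ i ∈ s, r i ^ ρ) ^ ρ⁻¹ := by
  rcases hρ.eq_or_lt with rfl | hρ
  · simp
  have hexp : (1 - ρ⁻¹) * ρ.conjExponent = 1 := by
    rw [Real.conjExponent]; field_simp
  have hholder := Real.inner_le_Lp_mul_Lq_of_nonneg s (Real.HolderConjugate.conjExponent hρ).symm
    (f := fun i => u i ^ (1 - ρ⁻¹)) (g := r) (fun i hi => Real.rpow_nonneg (hu i hi) _) hr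
  have hsum : ∑ i ∈ s, (u i ^ (1 - ρ⁻¹)) ^ ρ.conjExponent = ∑ i ∈ s, u i :=
    sum_congr rfl fun i hi => by rw [← Real.rpow_mul (hu i hi), hexp, Real.rpow_one]
  have hinv : 1 / ρ.conjExponent = 1 - ρ⁻¹ := by
    rw [Real.conjExponent]; field_simp
  simpa only [hsum, hinv, one_div] using hholder

lemma rpow_one_sub_le_of_le_mul_rpow {U C θ : ℝ} (hU : 0 ≤ U) (hC : 0 ≤ C) (hθ : θ < 1)
    (h : U ≤ C * U ^ θ) : U ^ (1 - θ) ≤ C := by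
  rcases hU.eq_or_lt with rfl | hU
  · rwa [Real.zero_rpow (by linarith)]
  · rwa [Real.rpow_sub hU, Real.rpow_one, div_le_iff₀ (Real.rpow_pos_of_pos hU _)]

section L2

variable {Ω : Type*} [MeasurableSpace Ω] {μ : Measure Ω}

lemma integral_mul_le_L2_mul_L2 {f g : Ω → ℝ}
    (hf : MemLp f 2 μ) (hg : MemLp g 2 μ) :
    ∫ ω, f ω * g ω ∂μ ≤ (∫ ω, f ω ^ 2 ∂μ) ^ ((1 : ℝ) / 2) * (∫ ω, g ω ^ 2 ∂μ) ^ ((1 : ℝ) / 2) := by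
  have h2 : ENNReal.ofReal 2 = 2 := by norm_num
  have hholder := integral_mul_norm_le_Lp_mul_Lq Real.HolderConjugate.two_two
    (h2 ▸ hf) (h2 ▸ hg)
  simp only [Real.norm_eq_abs, Real.rpow_two, sq_abs] at hholder
  refine le_trans (integral_mono (hf.integrable_mul hg) ?_ fun ω => ?_) hholder
  · exact (hf.norm.integrable_mul hg.norm).congr (by filter_upwards with ω using rfl)
  · rw [← abs_mul]; exact le_abs_self _

lemma integral_sum_mul_sq {ι : Type*} [Fintype ι]
    {ξ : ι → Ω → ℝ} (hξ : ∀ i, MemLp (ξ i) 2 μ) (β : ι → ℝ) :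
    ∫ ω, (∑ j, β j * ξ j ω) ^ 2 ∂μ = ∑ j, ∑ k, β j * β k * ∫ ω, ξ j ω * ξ k ω ∂μ := by
  have hexpand : ∀ ω, (∑ j, β j * ξ j ω) ^ 2 = ∑ j, ∑ k, β j * β k * (ξ j ω * ξ k ω) := fun ω => by
    rw [sq, sum_mul_sum]; simp only [mul_mul_mul_comm]
  have hint : ∀ j k, Integrable (fun ω => ξ j ω * ξ k ω) μ :=
    fun j k => (hξ j).integrable_mul (hξ k)
  simp only [hexpand]
  rw [integral_finsetSum _ fun j _ => integrable_finsetSum _ fun k _ => (hint j k).const_mul _]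
  refine sum_congr rfl fun j _ => ?_
  rw [integral_finsetSum _ fun k _ => (hint j k).const_mul _]
  simp only [integral_const_mul]

lemma integral_mul_sum {ι : Type*} [Fintype ι]
    {Z : Ω → ℝ} {ξ : ι → Ω → ℝ} (hZ : MemLp Z 2 μ) (hξ : ∀ i, MemLp (ξ i) 2 μ) (β : ι → ℝ) :
    ∫ ω, Z ω * ∑ j, β j * ξ j ω ∂μ = ∑ j, β j * ∫ ω, Z ω * ξ j ω ∂μ := by
  have hint : ∀ j, Integrable (fun ω => Z ω * ξ j ω) μ := fun j => hZ.integrable_mul (hξ j)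
  simp only [mul_sum, mul_left_comm (Z _)]
  rw [integral_finsetSum _ fun j _ => (hint j).const_mul _]
  simp only [integral_const_mul]

lemma integral_sub_mul_sub {f₁ f₂ g₁ g₂ : Ω → ℝ}
    (hf₁ : MemLp f₁ 2 μ) (hf₂ : MemLp f₂ 2 μ) (hg₁ : MemLp g₁ 2 μ) (hg₂ : MemLp g₂ 2 μ) :
    ∫ ω, (f₂ ω - f₁ ω) * (g₂ ω - g₁ ω) ∂μ = ∫ ω, f₁ ω * g₁ ω ∂μ - ∫ ω, f₁ ω * g₂ ω ∂μ
      - ∫ ω, f₂ ω * g₁ ω ∂μ + ∫ ω, f₂ ω * g₂ ω ∂μ := by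
  have hint : ∀ {f g : Ω → ℝ}, MemLp f 2 μ → MemLp g 2 μ → Integrable (fun ω => f ω * g ω) μ :=
    fun hf hg => hf.integrable_mul hg
  simp only [sub_mul, mul_sub]
  rw [integral_sub, integral_sub, integral_sub]
  · ring
  exacts [hint hf₂ hg₁, hint hf₁ hg₁, hint hf₂ hg₂, hint hf₁ hg₂,
    (hint hf₂ hg₂).sub (hint hf₁ hg₂), (hint hf₂ hg₁).sub (hint hf₁ hg₁)]

theorem sum_abs_integral_mul_rpow_le {ι : Type*} [Fintype ι] {ξ : ι → Ω → ℝ} {Z : Ω → ℝ}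
    (hξ : ∀ i, MemLp (ξ i) 2 μ) (hZ : MemLp Z 2 μ)
    {ρ q : ℝ} (hρ : 1 ≤ ρ) (hq : q = 1 / (1 / (2 * ρ) + 1 / 2)) :
    (∑ j, |∫ ω, Z ω * ξ j ω ∂μ| ^ q) ^ (1 / q) ≤ (∫ ω, Z ω ^ 2 ∂μ) ^ ((1 : ℝ) / 2) *
      √((∑ j, (∑ i, |∫ ω, ξ i ω * ξ j ω ∂μ|) ^ ρ) ^ (1 / ρ)) := by
  set a : ι → ℝ := fun j => ∫ ω, Z ω * ξ j ω ∂μ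
  set β : ι → ℝ := fun j => Real.sign (a j) * |a j| ^ (q - 1)
  set r : ι → ℝ := fun j => ∑ i, |∫ ω, ξ i ω * ξ j ω ∂μ|
  set U := ∑ j, |a j| ^ q
  set W := (∑ j, r j ^ ρ) ^ (1 / ρ)
  set K := (∫ ω, Z ω ^ 2 ∂μ) ^ ((1 : ℝ) / 2)
  have hρ0 : 0 < ρ := by linarith
  have hq' : q = 2 * ρ / (ρ + 1) := by rw [hq]; field_simp; ring
  have hq0 : 0 < q := by rw [hq']; positivity
  have hU : 0 ≤ U := by positivity
  have hr : ∀ j, 0 ≤ r j := fun j => by positivity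
  have hpair : ∫ ω, Z ω * ∑ j, β j * ξ j ω ∂μ = U := by
    rw [integral_mul_sum hZ hξ]
    exact sum_congr rfl fun j _ => sign_mul_abs_rpow_sub_one_mul_self (a j) hq0.ne'
  have hYsq : ∫ ω, (∑ j, β j * ξ j ω) ^ 2 ∂μ ≤ U ^ (1 - ρ⁻¹) * W := by
    calc _ = ∑ j, ∑ k, β j * β k * ∫ ω, ξ j ω * ξ k ω ∂μ := integral_sum_mul_sq hξ β
      _ ≤ ∑ j, β j ^ 2 * r j := sum_mul_mul_le_sum_sq_mul_sum_abs β fun i j =>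
          integral_congr_ae (.of_forall fun ω => mul_comm _ _)
      _ ≤ ∑ j, (|a j| ^ q) ^ (1 - ρ⁻¹) * r j := by
          gcongr with j
          rw [← Real.rpow_mul (abs_nonneg _), show q * (1 - ρ⁻¹) = 2 * (q - 1) by
            rw [hq']; field_simp; ring]
          exact sq_sign_mul_abs_rpow_sub_one_le _
      _ ≤ U ^ (1 - ρ⁻¹) * W := by
          simpa only [U, W, one_div] using sum_rpow_one_sub_inv_mul_le univ hρ
            (fun j _ => Real.rpow_nonneg (abs_nonneg (a j)) q) fun j _ => hr j
  have hY : MemLp (fun ω => ∑ j, β j * ξ j ω) 2 μ :=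
    memLp_finsetSum _ fun j _ => (hξ j).const_mul (β j)
  have hCS : U ≤ K * √W * U ^ ((1 - ρ⁻¹) / 2) :=
    calc U = ∫ ω, Z ω * ∑ j, β j * ξ j ω ∂μ := hpair.symm
      _ ≤ K * (∫ ω, (∑ j, β j * ξ j ω) ^ 2 ∂μ) ^ ((1 : ℝ) / 2) := integral_mul_le_L2_mul_L2 hZ hY
      _ ≤ K * (U ^ (1 - ρ⁻¹) * W) ^ ((1 : ℝ) / 2) := by gcongr
      _ = K * √W * U ^ ((1 - ρ⁻¹) / 2) := by
          rw [Real.mul_rpow (by positivity) (by positivity), ← Real.rpow_mul hU, mul_one_div,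
            Real.sqrt_eq_rpow]
          ring
  have h1q : 1 / q = 1 - (1 - ρ⁻¹) / 2 := by rw [hq, one_div_one_div]; ring
  rw [h1q]
  exact rpow_one_sub_le_of_le_mul_rpow hU (by positivity) (by linarith [inv_pos.2 hρ0]) hCS

end L2

theorem stmt0_general
    (T : ℝ)
    {Ω : Type*} [MeasurableSpace Ω] (P : Measure Ω)
    (X : ℝ → Ω → ℝ)
    (hX2 : ∀ t, MemLp (X t) 2 P)
    (R : ℝ → ℝ → ℝ)
    (hR : ∀ s t, R s t = ∫ ω, X s ω * X t ω ∂P)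
    (ρ : ℝ) (hρ : 1 ≤ ρ)
    -- `V s t` dominates the mixed (1,ρ)-variation of `R` over `[s,t]²`
    (V : ℝ → ℝ → ℝ)
    (hV : ∀ s t, 0 ≤ s → s ≤ t → t ≤ T →
      ∀ (m : ℕ) (D : Fin (m + 1) → ℝ) (m' : ℕ) (D' : Fin (m' + 1) → ℝ),
        Monotone D → D 0 = s → D (Fin.last m) = t →
        Monotone D' → D' 0 = s → D' (Fin.last m') = t →
        (∑ j : Fin m', (∑ i : Fin m,
            |R (D i.castSucc) (D' j.castSucc) - R (D i.castSucc) (D' j.succ)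
              - R (D i.succ) (D' j.castSucc) + R (D i.succ) (D' j.succ)|) ^ ρ) ^ (1 / ρ)
          ≤ V s t)
    -- Cameron–Martin path: `h t = E[Z X_t]`, `Z` in the `L²`-closure of the span of the `X_t`
    (Z : Ω → ℝ) (hZ2 : MemLp Z 2 P)
    (h : ℝ → ℝ) (hh : ∀ t, h t = ∫ ω, Z ω * X t ω ∂P)
    (q : ℝ) (hq : q = 1 / (1 / (2 * ρ) + 1 / 2)) :
    ∀ s t, 0 ≤ s → s ≤ t → t ≤ T →
      ∀ (m : ℕ) (D : Fin (m + 1) → ℝ),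
        Monotone D → D 0 = s → D (Fin.last m) = t →
        (∑ j : Fin m, |h (D j.succ) - h (D j.castSucc)| ^ q) ^ (1 / q)
          ≤ (∫ ω, Z ω ^ 2 ∂P) ^ ((1:ℝ) / 2) * Real.sqrt (V s t) := by
  intro s t hs hst htT m D hD hD0 hDl
  set ξ : Fin m → Ω → ℝ := fun j ω => X (D j.succ) ω - X (D j.castSucc) ω
  have hZX : ∀ u, Integrable (fun ω => Z ω * X u ω) P := fun u => hZ2.integrable_mul (hX2 u)
  have hincr : ∀ j, h (D j.succ) - h (D j.castSucc) = ∫ ω, Z ω * ξ j ω ∂P := fun j => by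
    simp only [hh, ξ, mul_sub]
    rw [integral_sub (hZX _) (hZX _)]
  have hcov : ∀ i j, ∫ ω, ξ i ω * ξ j ω ∂P = R (D i.castSucc) (D j.castSucc)
      - R (D i.castSucc) (D j.succ) - R (D i.succ) (D j.castSucc) + R (D i.succ) (D j.succ) :=
    fun i j => by simp only [hR]; exact integral_sub_mul_sub (hX2 _) (hX2 _) (hX2 _) (hX2 _)
  have key := sum_abs_integral_mul_rpow_le (fun j => (hX2 _).sub (hX2 _)) hZ2 hρ hq (ξ := ξ)
  simp only [← hincr, hcov] at key
  exact key.trans (by gcongr; exact hV s t hs hst htT m D m D hD hD0 hDl hD hD0 hDl)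

/-- Cameron–Martin embedding under finite mixed `(1,ρ)`-variation:
`‖h‖_{q-var;[s,t]} ≤ ‖h‖_H √(V_{1,ρ}(R;[s,t]²))` with `q = 1/(1/(2ρ)+1/2)`. -/
theorem stmt0
    (T : ℝ) (hT : 0 < T)
    {Ω : Type*} [MeasurableSpace Ω] (P : Measure Ω) [IsProbabilityMeasure P]
    (X : ℝ → Ω → ℝ)
    (hX2 : ∀ t, MemLp (X t) 2 P)
    (hcent : ∀ t, ∫ ω, X t ω ∂P = 0)
    -- `X` is a Gaussian process: every finite linear combination is a centered Gaussian
    (hGauss : ∀ (n : ℕ) (c : Fin n → ℝ) (τ : Fin n → ℝ),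
      ∃ v : NNReal, Measure.map (fun ω => ∑ i, c i * X (τ i) ω) P = gaussianReal 0 v)
    (R : ℝ → ℝ → ℝ)
    (hR : ∀ s t, R s t = ∫ ω, X s ω * X t ω ∂P)
    (ρ : ℝ) (hρ : 1 ≤ ρ)
    -- `V s t` dominates the mixed (1,ρ)-variation of `R` over `[s,t]²`
    (V : ℝ → ℝ → ℝ)
    (hV : ∀ s t, 0 ≤ s → s ≤ t → t ≤ T →
      ∀ (m : ℕ) (D : Fin (m + 1) → ℝ) (m' : ℕ) (D' : Fin (m' + 1) → ℝ),
        Monotone D → D 0 = s → D (Fin.last m) = t →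
        Monotone D' → D' 0 = s → D' (Fin.last m') = t →
        (∑ j : Fin m', (∑ i : Fin m,
            |R (D i.castSucc) (D' j.castSucc) - R (D i.castSucc) (D' j.succ)
              - R (D i.succ) (D' j.castSucc) + R (D i.succ) (D' j.succ)|) ^ ρ) ^ (1 / ρ)
          ≤ V s t)
    -- Cameron–Martin path: `h t = E[Z X_t]`, `Z` in the `L²`-closure of the span of the `X_t`
    (Z : Ω → ℝ) (hZ2 : MemLp Z 2 P)
    (hZspan : ∀ ε > (0:ℝ), ∃ (n : ℕ) (c : Fin n → ℝ) (τ : Fin n → ℝ),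
      ∫ ω, (Z ω - ∑ i, c i * X (τ i) ω) ^ 2 ∂P < ε)
    (h : ℝ → ℝ) (hh : ∀ t, h t = ∫ ω, Z ω * X t ω ∂P)
    (q : ℝ) (hq : q = 1 / (1 / (2 * ρ) + 1 / 2)) :
    ∀ s t, 0 ≤ s → s ≤ t → t ≤ T →
      ∀ (m : ℕ) (D : Fin (m + 1) → ℝ),
        Monotone D → D 0 = s → D (Fin.last m) = t →
        (∑ j : Fin m, |h (D j.succ) - h (D j.castSucc)| ^ q) ^ (1 / q)
          ≤ (∫ ω, Z ω ^ 2 ∂P) ^ ((1:ℝ) / 2) * Real.sqrt (V s t) :=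
  stmt0_general T P X hX2 R hR ρ hρ V hV Z hZ2 h hh q hq
end

section
/- Let R : [0,T]² → ℝ be symmetric and continuous, μ₋ a finite nonnegative Borel measure on [0,T]², and suppose: (i) for every rectangle A = [s,t]×[u,v] ⊆ [0,T]² one has the rectangular increment bound R(A) ≥ -μ₋(A), and (ii) R(A) + μ₋(A) ≥ 0 for all rectangles A. Then the 1-variation of R over any rectangle A satisfies V₁(R;A) ≤ R(A) + 2μ₋(A), where R(A) denotes the rectangular increment R(s,u) - R(s,v) - R(t,u) + R(t,v). -/
/-!
If a cell increment `x` satisfies `x ≥ -μ(cell)`, then `|x| ≤ x + 2 μ(cell)`. Summing over the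
cells of a grid, the increments telescope to `R(A)`, and the cell masses add up to at most `μ(A)`
as long as the cells are disjoint. Closed cells share edges, which may carry mass, so the lower
bound is first transferred to the half-open cells `(s,t] × (u,v]`: these contain the closed
rectangles `[s+δ,t] × [u+δ,v]`, and continuity of `R` lets `δ → 0`.
-/

open MeasureTheory Set Filter Topology
open scoped Function

def rectIncr {α β G : Type*} [AddCommGroup G] (R : α → β → G) (s t : α) (u v : β) : G :=
  R s u - R s v - R t u + R t v

theorem Fin.sum_castSucc_sub_succ {G : Type*} [AddCommGroup G] {n : ℕ} (f : Fin (n + 1) → G) :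
    ∑ i : Fin n, (f i.castSucc - f i.succ) = f 0 - f (Fin.last n) := by
  induction n with
  | zero => simp
  | succ n ih =>
    rw [Fin.sum_univ_castSucc]
    simp only [Fin.succ_castSucc]
    rw [ih fun i => f i.castSucc, Fin.castSucc_zero, Fin.succ_last]
    abel

theorem sum_sum_rectIncr {α β G : Type*} [AddCommGroup G] (R : α → β → G) {m m' : ℕ}
    (D : Fin (m + 1) → α) (D' : Fin (m' + 1) → β) :
    ∑ i : Fin m, ∑ j : Fin m', rectIncr R (D i.castSucc) (D i.succ) (D' j.castSucc) (D' j.succ)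
      = rectIncr R (D 0) (D (Fin.last m)) (D' 0) (D' (Fin.last m')) := by
  have hrow : ∀ a b, ∑ j : Fin m', rectIncr R a b (D' j.castSucc) (D' j.succ)
      = rectIncr R a b (D' 0) (D' (Fin.last m')) := fun a b =>
    (Finset.sum_congr rfl fun j _ => by rw [rectIncr]; abel).trans
      ((Fin.sum_castSucc_sub_succ fun j => R a (D' j) - R b (D' j)).trans (by rw [rectIncr]; abel))
  simp only [hrow]
  exact (Finset.sum_congr rfl fun i _ => by rw [rectIncr]; abel).trans
    ((Fin.sum_castSucc_sub_succ fun i => R (D i) (D' 0) - R (D i) (D' (Fin.last m'))).trans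
      (by rw [rectIncr]; abel))

theorem Monotone.pairwise_disjoint_on_Ioc_castSucc_succ {β : Type*} [Preorder β] {n : ℕ}
    {f : Fin (n + 1) → β} (hf : Monotone f) :
    Pairwise (Disjoint on fun i : Fin n => Ioc (f i.castSucc) (f i.succ)) := by
  intro i j hij
  simpa only [Function.onFun, Fin.orderSucc_castSucc] using
    hf.pairwise_disjoint_on_Ioc_succ (Fin.castSucc_injective n |>.ne hij)

theorem sum_measureReal_Ioc_prod_Ioc_le {μ : Measure (ℝ × ℝ)} [IsFiniteMeasure μ] {m m' : ℕ}
    {D : Fin (m + 1) → ℝ} {D' : Fin (m' + 1) → ℝ} (hD : Monotone D) (hD' : Monotone D') :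
    ∑ i : Fin m, ∑ j : Fin m',
        μ.real (Ioc (D i.castSucc) (D i.succ) ×ˢ Ioc (D' j.castSucc) (D' j.succ))
      ≤ μ.real (Icc (D 0) (D (Fin.last m)) ×ˢ Icc (D' 0) (D' (Fin.last m'))) := by
  have hdisj := PairwiseDisjoint.prod
    (hD.pairwise_disjoint_on_Ioc_castSucc_succ.set_pairwise univ)
    (hD'.pairwise_disjoint_on_Ioc_castSucc_succ.set_pairwise univ)
  rw [univ_prod_univ] at hdisj
  rw [← Fintype.sum_prod_type', ← measureReal_iUnion_fintype (pairwise_univ.1 hdisj)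
    fun _ => measurableSet_Ioc.prod measurableSet_Ioc]
  refine measureReal_mono (iUnion_subset fun p => prod_mono ?_ ?_)
  · exact Ioc_subset_Icc_self.trans (Icc_subset_Icc (hD (Fin.zero_le _)) (hD (Fin.le_last _)))
  · exact Ioc_subset_Icc_self.trans (Icc_subset_Icc (hD' (Fin.zero_le _)) (hD' (Fin.le_last _)))

theorem neg_measureReal_Ioc_prod_Ioc_le_rectIncr {a b c d : ℝ} {R : ℝ → ℝ → ℝ}
    (hcont : ContinuousOn (fun p : ℝ × ℝ => R p.1 p.2) (Icc a b ×ˢ Icc c d))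
    {μ : Measure (ℝ × ℝ)} [IsFiniteMeasure μ]
    (hlow : ∀ s t u v : ℝ, a ≤ s → s ≤ t → t ≤ b → c ≤ u → u ≤ v → v ≤ d →
      -μ.real (Icc s t ×ˢ Icc u v) ≤ rectIncr R s t u v)
    {s t u v : ℝ} (hs : a ≤ s) (hst : s ≤ t) (ht : t ≤ b) (hu : c ≤ u) (huv : u ≤ v)
    (hv : v ≤ d) :
    -μ.real (Ioc s t ×ˢ Ioc u v) ≤ rectIncr R s t u v := by
  rcases hst.eq_or_lt with rfl | hst
  · simp [rectIncr]
  rcases huv.eq_or_lt with rfl | huv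
  · simp [rectIncr]
  set ε := min (t - s) (v - u)
  have hε : 0 < ε := lt_min (sub_pos.2 hst) (sub_pos.2 huv)
  have hεst : ε ≤ t - s := min_le_left _ _
  have hεuv : ε ≤ v - u := min_le_right _ _
  have hcomp : ∀ {x y : ℝ → ℝ}, Continuous x → Continuous y →
      MapsTo (fun δ => (x δ, y δ)) (Icc 0 ε) (Icc a b ×ˢ Icc c d) →
      ContinuousOn (fun δ => R (x δ) (y δ)) (Icc 0 ε) :=
    fun hx hy hmaps => hcont.comp (hx.prodMk hy).continuousOn hmaps
  have hφ : ContinuousOn (fun δ => rectIncr R (s + δ) t (u + δ) v) (Icc 0 ε) := by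
    refine (((hcomp ?_ ?_ ?_).sub (hcomp ?_ ?_ ?_)).sub (hcomp ?_ ?_ ?_)).add (hcomp ?_ ?_ ?_) <;>
      first
      | fun_prop
      | exact fun δ ⟨hδ0, hδε⟩ => ⟨⟨by linarith, by linarith⟩, ⟨by linarith, by linarith⟩⟩
  have hbound : ∀ δ ∈ Ioo 0 ε, -μ.real (Ioc s t ×ˢ Ioc u v) ≤ rectIncr R (s + δ) t (u + δ) v := by
    rintro δ ⟨hδ0, hδε⟩
    have hsub : Icc (s + δ) t ×ˢ Icc (u + δ) v ⊆ Ioc s t ×ˢ Ioc u v :=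
      prod_mono (Icc_subset_Ioc (by linarith) le_rfl) (Icc_subset_Ioc (by linarith) le_rfl)
    have := hlow (s + δ) t (u + δ) v (by linarith) (by linarith) ht (by linarith) (by linarith) hv
    linarith [measureReal_mono (μ := μ) hsub]
  have htend : Tendsto (fun δ => rectIncr R (s + δ) t (u + δ) v) (𝓝[>] 0)
      (𝓝 (rectIncr R s t u v)) := by
    have h := (hφ 0 ⟨le_rfl, hε.le⟩).mono Ioo_subset_Icc_self
    rw [ContinuousWithinAt, nhdsWithin_Ioo_eq_nhdsGT hε] at h
    simpa using h
  exact ge_of_tendsto htend (mem_of_superset (Ioo_mem_nhdsGT hε) hbound)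

theorem sum_abs_rectIncr_le (R : ℝ → ℝ → ℝ) {μ : Measure (ℝ × ℝ)} [IsFiniteMeasure μ] {m m' : ℕ}
    {D : Fin (m + 1) → ℝ} {D' : Fin (m' + 1) → ℝ} (hD : Monotone D) (hD' : Monotone D')
    (hlow : ∀ (i : Fin m) (j : Fin m'),
      -μ.real (Ioc (D i.castSucc) (D i.succ) ×ˢ Ioc (D' j.castSucc) (D' j.succ))
        ≤ rectIncr R (D i.castSucc) (D i.succ) (D' j.castSucc) (D' j.succ)) :
    ∑ i : Fin m, ∑ j : Fin m', |rectIncr R (D i.castSucc) (D i.succ) (D' j.castSucc) (D' j.succ)|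
      ≤ rectIncr R (D 0) (D (Fin.last m)) (D' 0) (D' (Fin.last m'))
        + 2 * μ.real (Icc (D 0) (D (Fin.last m)) ×ˢ Icc (D' 0) (D' (Fin.last m'))) := by
  calc _ ≤ ∑ i : Fin m, ∑ j : Fin m',
        (rectIncr R (D i.castSucc) (D i.succ) (D' j.castSucc) (D' j.succ)
          + 2 * μ.real (Ioc (D i.castSucc) (D i.succ) ×ˢ Ioc (D' j.castSucc) (D' j.succ))) := by
        gcongr with i _ j _
        have hμ : 0 ≤ μ.real (Ioc (D i.castSucc) (D i.succ) ×ˢ Ioc (D' j.castSucc) (D' j.succ)) :=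
          measureReal_nonneg
        exact abs_le.2 ⟨by linarith [hlow i j], by linarith⟩
    _ ≤ _ := by
        simp only [Finset.sum_add_distrib, ← Finset.mul_sum, sum_sum_rectIncr]
        gcongr
        exact sum_measureReal_Ioc_prod_Ioc_le hD hD'

theorem stmt4_general (T : ℝ) (R : ℝ → ℝ → ℝ)
    (hcont : ContinuousOn (fun p : ℝ × ℝ => R p.1 p.2) (Set.Icc 0 T ×ˢ Set.Icc 0 T))
    (μ : Measure (ℝ × ℝ)) [IsFiniteMeasure μ]
    (hlow : ∀ s t u v : ℝ, 0 ≤ s → s ≤ t → t ≤ T → 0 ≤ u → u ≤ v → v ≤ T →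
      -(μ (Set.Icc s t ×ˢ Set.Icc u v)).toReal ≤ R s u - R s v - R t u + R t v) :
    ∀ s t u v : ℝ, 0 ≤ s → s ≤ t → t ≤ T → 0 ≤ u → u ≤ v → v ≤ T →
      ∀ (m : ℕ) (D : Fin (m + 1) → ℝ) (m' : ℕ) (D' : Fin (m' + 1) → ℝ),
        Monotone D → D 0 = s → D (Fin.last m) = t →
        Monotone D' → D' 0 = u → D' (Fin.last m') = v →
        ∑ i : Fin m, ∑ j : Fin m',
          |R (D i.castSucc) (D' j.castSucc) - R (D i.castSucc) (D' j.succ)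
            - R (D i.succ) (D' j.castSucc) + R (D i.succ) (D' j.succ)|
          ≤ (R s u - R s v - R t u + R t v)
            + 2 * (μ (Set.Icc s t ×ˢ Set.Icc u v)).toReal := by
  rintro s t u v hs - ht hu - hv m D m' D' hD rfl rfl hD' rfl rfl
  refine sum_abs_rectIncr_le R hD hD' fun i j =>
    neg_measureReal_Ioc_prod_Ioc_le_rectIncr hcont hlow ?_ (hD i.castSucc_le_succ) ?_ ?_
      (hD' j.castSucc_le_succ) ?_
  · exact hs.trans (hD (Fin.zero_le _))
  · exact (hD (Fin.le_last _)).trans ht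
  · exact hu.trans (hD' (Fin.zero_le _))
  · exact (hD' (Fin.le_last _)).trans hv

/-- Theorem (Part A): if all rectangular increments of `R` are bounded below by `-μ₋`
of the rectangle, then `V₁(R;A) ≤ R(A) + 2μ₋(A)` for every rectangle `A`. -/
theorem stmt4 (T : ℝ) (hT : 0 < T) (R : ℝ → ℝ → ℝ)
    (hcont : ContinuousOn (fun p : ℝ × ℝ => R p.1 p.2) (Set.Icc 0 T ×ˢ Set.Icc 0 T))
    (hsymm : ∀ s t, R s t = R t s)
    (μ : Measure (ℝ × ℝ)) [IsFiniteMeasure μ]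
    (hlow : ∀ s t u v : ℝ, 0 ≤ s → s ≤ t → t ≤ T → 0 ≤ u → u ≤ v → v ≤ T →
      -(μ (Set.Icc s t ×ˢ Set.Icc u v)).toReal ≤ R s u - R s v - R t u + R t v) :
    ∀ s t u v : ℝ, 0 ≤ s → s ≤ t → t ≤ T → 0 ≤ u → u ≤ v → v ≤ T →
      ∀ (m : ℕ) (D : Fin (m + 1) → ℝ) (m' : ℕ) (D' : Fin (m' + 1) → ℝ),
        Monotone D → D 0 = s → D (Fin.last m) = t →
        Monotone D' → D' 0 = u → D' (Fin.last m') = v →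
        ∑ i : Fin m, ∑ j : Fin m',
          |R (D i.castSucc) (D' j.castSucc) - R (D i.castSucc) (D' j.succ)
            - R (D i.succ) (D' j.castSucc) + R (D i.succ) (D' j.succ)|
          ≤ (R s u - R s v - R t u + R t v)
            + 2 * (μ (Set.Icc s t ×ˢ Set.Icc u v)).toReal :=
  stmt4_general T R hcont μ hlow
end

section
/- Let R : I² → ℝ be continuous and symmetric, and suppose that for all off-diagonal rectangles (s,t)×(u,v) ⊆ I² with t ≤ u the rectangular increment satisfies R([s,t]×[u,v]) ≤ 0. Then for all [u,v] ⊆ [s,t] ⊆ I, the rectangular increment satisfies R([s,t]×[u,v]) ≤ σ²(u,v), where σ²(u,v) = R(u,u) + R(v,v) - 2R(u,v). -/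
/-- Rectangular increment of a two-parameter function over `[a,b] × [c,d]`. -/
def rectInc (R : ℝ → ℝ → ℝ) (a b c d : ℝ) : ℝ := R a c - R a d - R b c + R b d

/-!
Split `[s,t]` at `u ≤ v` into `[s,u] ∪ [u,v] ∪ [v,t]`. The increments over `[s,u]×[u,v]` and
`[v,t]×[u,v]` are off-diagonal (the latter after reflecting through the diagonal by symmetry),
hence `≤ 0`, while the diagonal square `[u,v]×[u,v]` has increment exactly `σ²(u,v)`.
-/

theorem rectInc_add_add (R : ℝ → ℝ → ℝ) (s u v t c d : ℝ) :
    rectInc R s t c d = rectInc R s u c d + rectInc R u v c d + rectInc R v t c d := by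
  simp only [rectInc]
  ring

theorem rectInc_comm_of_symm {S : Set ℝ} {R : ℝ → ℝ → ℝ}
    (hsymm : ∀ x ∈ S, ∀ y ∈ S, R x y = R y x) {a b c d : ℝ}
    (ha : a ∈ S) (hb : b ∈ S) (hc : c ∈ S) (hd : d ∈ S) :
    rectInc R a b c d = rectInc R c d a b := by
  simp only [rectInc, hsymm a ha c hc, hsymm a ha d hd, hsymm b hb c hc, hsymm b hb d hd]
  ring

theorem rectInc_self_of_symm {R : ℝ → ℝ → ℝ} {u v : ℝ} (h : R v u = R u v) :
    rectInc R u v u v = R u u + R v v - 2 * R u v := by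
  simp only [rectInc, h]
  ring

theorem stmt6_general (a b : ℝ) (R : ℝ → ℝ → ℝ)
    (hsymm : ∀ s ∈ Set.Icc a b, ∀ t ∈ Set.Icc a b, R s t = R t s)
    (hoff : ∀ s t u v : ℝ, a ≤ s → s ≤ t → t ≤ u → u ≤ v → v ≤ b →
      rectInc R s t u v ≤ 0) :
    ∀ s u v t : ℝ, a ≤ s → s ≤ u → u ≤ v → v ≤ t → t ≤ b →
      rectInc R s t u v ≤ R u u + R v v - 2 * R u v := by
  intro s u v t has hsu huv hvt htb
  have hu : u ∈ Set.Icc a b := ⟨has.trans hsu, (huv.trans hvt).trans htb⟩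
  have hv : v ∈ Set.Icc a b := ⟨hu.1.trans huv, hvt.trans htb⟩
  have ht : t ∈ Set.Icc a b := ⟨hv.1.trans hvt, htb⟩
  have left : rectInc R s u u v ≤ 0 := hoff s u u v has hsu le_rfl huv hv.2
  have right : rectInc R v t u v ≤ 0 := by
    rw [rectInc_comm_of_symm hsymm hv ht hu hv]
    exact hoff u v v t hu.1 huv le_rfl hvt htb
  have diag := rectInc_self_of_symm (R := R) (hsymm v hv u hu)
  rw [rectInc_add_add R s u v t]
  linarith

/-- If all off-diagonal rectangular increments of a continuous symmetric `R` are `≤ 0`, then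
`R([s,t]×[u,v]) ≤ σ²(u,v)` for all `[u,v] ⊆ [s,t] ⊆ I`. -/
theorem stmt6 (a b : ℝ) (hab : a ≤ b) (R : ℝ → ℝ → ℝ)
    (hcont : ContinuousOn (fun p : ℝ × ℝ => R p.1 p.2) (Set.Icc a b ×ˢ Set.Icc a b))
    (hsymm : ∀ s ∈ Set.Icc a b, ∀ t ∈ Set.Icc a b, R s t = R t s)
    (hoff : ∀ s t u v : ℝ, a ≤ s → s ≤ t → t ≤ u → u ≤ v → v ≤ b →
      rectInc R s t u v ≤ 0) :
    ∀ s u v t : ℝ, a ≤ s → s ≤ u → u ≤ v → v ≤ t → t ≤ b →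
      rectInc R s t u v ≤ R u u + R v v - 2 * R u v :=
  stmt6_general a b R hsymm hoff
end

section
/- Let μ be a finite signed Borel measure on the circle S¹ = ℝ/2πℤ with total variation ‖μ‖_TV, let R : S¹ × I → ℝ, and define R_μ(s,t) := ∫_{S¹} R(s-x, t) dμ(x). Then for all 1 ≤ γ ≤ ρ and all rectangles [s,t]×[u,v] ⊆ S¹ × I: V_{γ,ρ}(R_μ; [s,t]×[u,v]) ≤ ‖μ‖_TV · sup_{x ∈ S¹} V_{γ,ρ}(R; [s-x,t-x]×[u,v]). -/
/-!
The rectangular increments of `R_μ` over a grid are the increments of `R(· - x, ·)` integrated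
against `μp - μn`. For `1 ≤ γ ≤ ρ` the mixed `(γ,ρ)`-sum of an increment array is the norm of the
nested space `ℓ^ρ(ℓ^γ)`, so the triangle inequality and `‖∫ f‖ ≤ ∫ ‖f‖` in that Banach space (the
two Jensen steps) bound it by `(μp + μn)(S¹) · M`.
-/

open MeasureTheory

noncomputable section

section MixedLpNorm

variable {ι κ : Type*} [Fintype ι] [Fintype κ]

/-- The sum inside the supremum defining `V_{γ,ρ}`, applied to an increment array `a j i`. -/
def mixedLpNorm (γ ρ : ℝ) (a : κ → ι → ℝ) : ℝ :=
  (∑ j, (∑ i, |a j i| ^ γ) ^ (ρ / γ)) ^ (1 / ρ)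

abbrev toMixedLp (γ ρ : ℝ) (a : κ → ι → ℝ) :
    PiLp (ENNReal.ofReal ρ) (fun _ : κ => PiLp (ENNReal.ofReal γ) (fun _ : ι => ℝ)) :=
  WithLp.toLp _ fun j => WithLp.toLp _ (a j)

theorem mixedLpNorm_eq_norm {γ ρ : ℝ} (hγ : 0 < γ) (hρ : 0 < ρ) (a : κ → ι → ℝ) :
    mixedLpNorm γ ρ a = ‖toMixedLp γ ρ a‖ := by
  have hρ' : 0 < (ENNReal.ofReal ρ).toReal := by rwa [ENNReal.toReal_ofReal hρ.le]
  have hγ' : 0 < (ENNReal.ofReal γ).toReal := by rwa [ENNReal.toReal_ofReal hγ.le]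
  rw [PiLp.norm_eq_sum hρ', ENNReal.toReal_ofReal hρ.le, mixedLpNorm]
  congr 1
  refine Finset.sum_congr rfl fun j _ => ?_
  rw [PiLp.norm_eq_sum hγ', ENNReal.toReal_ofReal hγ.le,
    ← Real.rpow_mul (Finset.sum_nonneg fun i _ => by positivity), one_div_mul_eq_div]
  simp only [Real.norm_eq_abs]

variable {γ ρ : ℝ} (hγ : 1 ≤ γ) (hρ : 1 ≤ ρ)
include hγ hρ

theorem mixedLpNorm_sub_le (a b : κ → ι → ℝ) :
    mixedLpNorm γ ρ (a - b) ≤ mixedLpNorm γ ρ a + mixedLpNorm γ ρ b := by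
  have : Fact (1 ≤ ENNReal.ofReal γ) := ⟨ENNReal.one_le_ofReal.mpr hγ⟩
  have : Fact (1 ≤ ENNReal.ofReal ρ) := ⟨ENNReal.one_le_ofReal.mpr hρ⟩
  have hγ0 : 0 < γ := by linarith
  have hρ0 : 0 < ρ := by linarith
  simp only [mixedLpNorm_eq_norm hγ0 hρ0]
  exact norm_sub_le (toMixedLp γ ρ a) (toMixedLp γ ρ b)

theorem mixedLpNorm_integral_le {X : Type*} [MeasurableSpace X] (ν : Measure X)
    [IsFiniteMeasure ν] (f : X → κ → ι → ℝ) (hf : ∀ j i, Integrable (fun x => f x j i) ν)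
    {M : ℝ} (hM : ∀ᵐ x ∂ν, mixedLpNorm γ ρ (f x) ≤ M) :
    mixedLpNorm γ ρ (fun j i => ∫ x, f x j i ∂ν) ≤ M * ν.real Set.univ := by
  have : Fact (1 ≤ ENNReal.ofReal γ) := ⟨ENNReal.one_le_ofReal.mpr hγ⟩
  have : Fact (1 ≤ ENNReal.ofReal ρ) := ⟨ENNReal.one_le_ofReal.mpr hρ⟩
  have hγ0 : 0 < γ := by linarith
  have hρ0 : 0 < ρ := by linarith
  have hf_row : ∀ j, Integrable (fun x => (toMixedLp γ ρ (f x)) j) ν := fun j =>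
    Integrable.of_eval_piLp (hf j)
  have hint : toMixedLp γ ρ (fun j i => ∫ x, f x j i ∂ν) = ∫ x, toMixedLp γ ρ (f x) ∂ν := by
    ext j i
    rw [eval_integral_piLp hf_row, eval_integral_piLp (hf j)]
  rw [mixedLpNorm_eq_norm hγ0 hρ0, hint]
  exact norm_integral_le_of_norm_le_const (by simpa only [mixedLpNorm_eq_norm hγ0 hρ0] using hM)

end MixedLpNorm

section RectIncrement

variable {α β : Type*} {m m' : ℕ}

def rectIncrement (F : α → β → ℝ) (D : Fin (m + 1) → α) (D' : Fin (m' + 1) → β) :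
    Fin m' → Fin m → ℝ :=
  fun j i => F (D i.castSucc) (D' j.castSucc) - F (D i.castSucc) (D' j.succ)
    - F (D i.succ) (D' j.castSucc) + F (D i.succ) (D' j.succ)

theorem rectIncrement_sub (F G : α → β → ℝ) (D : Fin (m + 1) → α) (D' : Fin (m' + 1) → β) :
    rectIncrement (F - G) D D' = rectIncrement F D D' - rectIncrement G D D' := by
  ext j i
  simp only [rectIncrement, Pi.sub_apply]
  ring

theorem integrable_rectIncrement {X : Type*} [MeasurableSpace X] {ν : Measure X}
    {G : X → α → β → ℝ} (hG : ∀ a b, Integrable (fun x => G x a b) ν)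
    (D : Fin (m + 1) → α) (D' : Fin (m' + 1) → β) (j : Fin m') (i : Fin m) :
    Integrable (fun x => rectIncrement (G x) D D' j i) ν :=
  (((hG _ _).sub (hG _ _)).sub (hG _ _)).add (hG _ _)

theorem rectIncrement_integral {X : Type*} [MeasurableSpace X] (ν : Measure X)
    (G : X → α → β → ℝ) (hG : ∀ a b, Integrable (fun x => G x a b) ν)
    (D : Fin (m + 1) → α) (D' : Fin (m' + 1) → β) :
    rectIncrement (fun a b => ∫ x, G x a b ∂ν) D D'
      = fun j i => ∫ x, rectIncrement (G x) D D' j i ∂ν := by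
  ext j i
  simp only [rectIncrement]
  rw [integral_add, integral_sub, integral_sub]
  all_goals first
    | exact hG _ _ | exact (hG _ _).sub (hG _ _) | exact ((hG _ _).sub (hG _ _)).sub (hG _ _)

end RectIncrement

end

theorem stmt7_general [Fact (0 < 2 * Real.pi)]
    (R : AddCircle (2 * Real.pi) → ℝ → ℝ)
    (hR : Continuous fun p : AddCircle (2 * Real.pi) × ℝ => R p.1 p.2)
    (μp μn : Measure (AddCircle (2 * Real.pi))) [IsFiniteMeasure μp] [IsFiniteMeasure μn]
    (Rμ : ℝ → ℝ → ℝ)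
    (hRμ : ∀ s t : ℝ, Rμ s t
      = (∫ x, R ((s : AddCircle (2 * Real.pi)) - x) t ∂μp)
        - ∫ x, R ((s : AddCircle (2 * Real.pi)) - x) t ∂μn)
    (γ ρ : ℝ) (hγ : 1 ≤ γ) (hγρ : γ ≤ ρ)
    (s t u v : ℝ)
    (M : ℝ)
    -- `M` bounds the mixed variation of every shift `R(· - x, ·)` over `[s-x,t-x]×[u,v]`
    (hM : ∀ x : ℝ, ∀ (m : ℕ) (D : Fin (m + 1) → ℝ) (m' : ℕ) (D' : Fin (m' + 1) → ℝ),
      Monotone D → D 0 = s - x → D (Fin.last m) = t - x →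
      Monotone D' → D' 0 = u → D' (Fin.last m') = v →
      (∑ j : Fin m', (∑ i : Fin m,
          |R ((D i.castSucc : ℝ) : AddCircle (2 * Real.pi)) (D' j.castSucc)
            - R ((D i.castSucc : ℝ) : AddCircle (2 * Real.pi)) (D' j.succ)
            - R ((D i.succ : ℝ) : AddCircle (2 * Real.pi)) (D' j.castSucc)
            + R ((D i.succ : ℝ) : AddCircle (2 * Real.pi)) (D' j.succ)| ^ γ) ^ (ρ / γ))
        ^ (1 / ρ) ≤ M) :
    ∀ (m : ℕ) (D : Fin (m + 1) → ℝ) (m' : ℕ) (D' : Fin (m' + 1) → ℝ),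
      Monotone D → D 0 = s → D (Fin.last m) = t →
      Monotone D' → D' 0 = u → D' (Fin.last m') = v →
      (∑ j : Fin m', (∑ i : Fin m,
          |Rμ (D i.castSucc) (D' j.castSucc) - Rμ (D i.castSucc) (D' j.succ)
            - Rμ (D i.succ) (D' j.castSucc) + Rμ (D i.succ) (D' j.succ)| ^ γ) ^ (ρ / γ))
        ^ (1 / ρ)
        ≤ ((μp Set.univ + μn Set.univ).toReal) * M := by
  intro m D m' D' hD hD0 hDl hD' hD'0 hD'l
  have hρ : 1 ≤ ρ := hγ.trans hγρ
  set G : AddCircle (2 * Real.pi) → ℝ → ℝ → ℝ := fun x a b => R (a - x) b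
  have hG : ∀ (ν : Measure (AddCircle (2 * Real.pi))) [IsFiniteMeasure ν] (a b : ℝ),
      Integrable (fun x => G x a b) ν := fun ν _ a b =>
    (hR.comp ((continuous_sub_left _).prodMk continuous_const)).integrable_of_hasCompactSupport
      (.of_compactSpace _)
  have hRμ_eq : Rμ = (fun a b => ∫ x, G x a b ∂μp) - fun a b => ∫ x, G x a b ∂μn :=
    funext₂ hRμ
  have hG_bound : ∀ x, mixedLpNorm γ ρ (rectIncrement (G x) D D') ≤ M := by
    rintro ⟨x⟩
    convert hM x m (D · - x) m' D' (fun _ _ h => sub_le_sub_right (hD h) x) (by rw [hD0])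
      (by rw [hDl]) hD' hD'0 hD'l using 1
    simp only [G, rectIncrement, mixedLpNorm, AddCircle.coe_sub]
    rfl
  change mixedLpNorm γ ρ (rectIncrement Rμ D D') ≤ _
  rw [hRμ_eq, rectIncrement_sub, rectIncrement_integral μp G (hG μp),
    rectIncrement_integral μn G (hG μn), ENNReal.toReal_add (measure_ne_top _ _)
    (measure_ne_top _ _)]
  calc _ ≤ M * μp.real Set.univ + M * μn.real Set.univ :=
        (mixedLpNorm_sub_le hγ hρ _ _).trans <| add_le_add
          (mixedLpNorm_integral_le hγ hρ μp _ (integrable_rectIncrement (hG μp) D D')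
            (.of_forall hG_bound))
          (mixedLpNorm_integral_le hγ hρ μn _ (integrable_rectIncrement (hG μn) D D')
            (.of_forall hG_bound))
    _ = _ := by simp only [measureReal_def]; ring

/-- Young-type inequality for mixed `(γ,ρ)`-variation under convolution with a finite signed
measure `μ = μp - μn` on the circle `S¹ = ℝ/2πℤ`:
`V_{γ,ρ}(R_μ;[s,t]×[u,v]) ≤ ‖μ‖_TV · sup_x V_{γ,ρ}(R;[s-x,t-x]×[u,v])`. -/
theorem stmt7 [Fact (0 < 2 * Real.pi)]
    (R : AddCircle (2 * Real.pi) → ℝ → ℝ)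
    (hR : Continuous fun p : AddCircle (2 * Real.pi) × ℝ => R p.1 p.2)
    (μp μn : Measure (AddCircle (2 * Real.pi))) [IsFiniteMeasure μp] [IsFiniteMeasure μn]
    (hsing : Measure.MutuallySingular μp μn)
    (Rμ : ℝ → ℝ → ℝ)
    (hRμ : ∀ s t : ℝ, Rμ s t
      = (∫ x, R ((s : AddCircle (2 * Real.pi)) - x) t ∂μp)
        - ∫ x, R ((s : AddCircle (2 * Real.pi)) - x) t ∂μn)
    (γ ρ : ℝ) (hγ : 1 ≤ γ) (hγρ : γ ≤ ρ)
    (s t u v : ℝ) (hst : s ≤ t) (huv : u ≤ v)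
    (M : ℝ)
    -- `M` bounds the mixed variation of every shift `R(· - x, ·)` over `[s-x,t-x]×[u,v]`
    (hM : ∀ x : ℝ, ∀ (m : ℕ) (D : Fin (m + 1) → ℝ) (m' : ℕ) (D' : Fin (m' + 1) → ℝ),
      Monotone D → D 0 = s - x → D (Fin.last m) = t - x →
      Monotone D' → D' 0 = u → D' (Fin.last m') = v →
      (∑ j : Fin m', (∑ i : Fin m,
          |R ((D i.castSucc : ℝ) : AddCircle (2 * Real.pi)) (D' j.castSucc)
            - R ((D i.castSucc : ℝ) : AddCircle (2 * Real.pi)) (D' j.succ)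
            - R ((D i.succ : ℝ) : AddCircle (2 * Real.pi)) (D' j.castSucc)
            + R ((D i.succ : ℝ) : AddCircle (2 * Real.pi)) (D' j.succ)| ^ γ) ^ (ρ / γ))
        ^ (1 / ρ) ≤ M) :
    ∀ (m : ℕ) (D : Fin (m + 1) → ℝ) (m' : ℕ) (D' : Fin (m' + 1) → ℝ),
      Monotone D → D 0 = s → D (Fin.last m) = t →
      Monotone D' → D' 0 = u → D' (Fin.last m') = v →
      (∑ j : Fin m', (∑ i : Fin m,
          |Rμ (D i.castSucc) (D' j.castSucc) - Rμ (D i.castSucc) (D' j.succ)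
            - Rμ (D i.succ) (D' j.castSucc) + Rμ (D i.succ) (D' j.succ)| ^ γ) ^ (ρ / γ))
        ^ (1 / ρ)
        ≤ ((μp Set.univ + μn Set.univ).toReal) * M :=
  stmt7_general R hR μp μn Rμ hRμ γ ρ hγ hγρ s t u v M hM
end

section
/- Let X be a centered Gaussian process on [0,T] with covariance R(s,t) = E[X_s X_t] such that all increments are non-positively correlated (E[X_{a,b} X_{c,d}] ≤ 0 for disjoint intervals [a,b], [c,d]) and E[X_{a,b} X_{0,T}] ≥ 0 for every [a,b] ⊆ [0,T]. Then for every finite linear combination Y = Σ_i a_i X_{t_i,t_{i+1}} over intervals disjoint from (s,t), one has E[|X_{s,t} - Y|²] ≥ R([s,t]×[0,T]), where R([s,t]×[0,T]) = E[X_{s,t} X_{0,T}] and X_{a,b} := X_b - X_a. -/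
/-!
Refine to the partition `0 = p₀ < ⋯ < p_m = T` generated by all endpoints and write
`X_{s,t} - Y = ∑ₖ Aₖ eₖ` with `eₖ = X_{pₖ,pₖ₊₁}`. The Gram matrix `G` of the `eₖ` is symmetric,
has non-positive off-diagonal entries and non-negative row sums `rₖ = E[eₖ X_{0,T}]`, and for such
a matrix `aᵀGa = ∑ₖ rₖ aₖ² + ½ ∑ₖₗ (-Gₖₗ)(aₖ - aₗ)² ≥ ∑ₖ rₖ aₖ²`. Since `Aₖ = 1` whenever
`[pₖ, pₖ₊₁] ⊆ [s, t]`, the right-hand side dominates the sum of those `rₖ`, which is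
`E[X_{s,t} X_{0,T}]`.
-/

open MeasureTheory ProbabilityTheory Finset

theorem sum_rowSum_mul_sq_le_sum_sum_mul_mul {ι : Type*} (s : Finset ι) {G : ι → ι → ℝ}
    (hG : ∀ k l, G k l = G l k) (hoff : ∀ k ∈ s, ∀ l ∈ s, k ≠ l → G k l ≤ 0) (a : ι → ℝ) :
    ∑ k ∈ s, (∑ l ∈ s, G k l) * a k ^ 2 ≤ ∑ k ∈ s, ∑ l ∈ s, a k * a l * G k l := by
  have hD : ∑ k ∈ s, (∑ l ∈ s, G k l) * a k ^ 2 = ∑ k ∈ s, ∑ l ∈ s, G k l * a l ^ 2 := by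
    rw [sum_comm]
    simp_rw [hG _ _, sum_mul]
  have hsq : ∑ k ∈ s, ∑ l ∈ s, -G k l * (a k - a l) ^ 2 = 2 * ∑ k ∈ s, ∑ l ∈ s, a k * a l * G k l
      - ∑ k ∈ s, (∑ l ∈ s, G k l) * a k ^ 2 - ∑ k ∈ s, ∑ l ∈ s, G k l * a l ^ 2 := by
    simp only [sum_mul, mul_sum, ← sum_sub_distrib]
    exact sum_congr rfl fun k _ => sum_congr rfl fun l _ => by ring
  have hnonneg : 0 ≤ ∑ k ∈ s, ∑ l ∈ s, -G k l * (a k - a l) ^ 2 := by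
    refine sum_nonneg fun k hk => sum_nonneg fun l hl => ?_
    rcases eq_or_ne k l with rfl | hkl
    · simp
    · exact mul_nonneg (neg_nonneg.2 (hoff k hk l hl hkl)) (sq_nonneg _)
  linarith

theorem sum_sum_mul_le_sum_sum_mul_mul_of_le_sq {ι : Type*} (s : Finset ι) {G : ι → ι → ℝ}
    (hG : ∀ k l, G k l = G l k) (hoff : ∀ k ∈ s, ∀ l ∈ s, k ≠ l → G k l ≤ 0)
    (hrow : ∀ k ∈ s, 0 ≤ ∑ l ∈ s, G k l) {χ a : ι → ℝ} (hχa : ∀ k ∈ s, χ k ≤ a k ^ 2) :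
    ∑ k ∈ s, ∑ l ∈ s, χ k * G k l ≤ ∑ k ∈ s, ∑ l ∈ s, a k * a l * G k l :=
  calc ∑ k ∈ s, ∑ l ∈ s, χ k * G k l = ∑ k ∈ s, (∑ l ∈ s, G k l) * χ k :=
        sum_congr rfl fun k _ => by rw [sum_mul]; exact sum_congr rfl fun l _ => mul_comm _ _
    _ ≤ ∑ k ∈ s, (∑ l ∈ s, G k l) * a k ^ 2 :=
        sum_le_sum fun k hk => mul_le_mul_of_nonneg_left (hχa k hk) (hrow k hk)
    _ ≤ _ := sum_rowSum_mul_sq_le_sum_sum_mul_mul s hG hoff a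

theorem Finset.exists_strictMono_image_Iic_eq (F : Finset ℝ) (hF : F.Nonempty) :
    ∃ (p : ℕ → ℝ) (m : ℕ), StrictMono p ∧ p '' Set.Iic m = F ∧
      p 0 = F.min' hF ∧ p m = F.max' hF := by
  set N := F.card
  have hN : 0 < N := card_pos.2 hF
  set q := F.orderEmbOfFin rfl
  set p : ℕ → ℝ := fun k => if h : k < N then q ⟨k, h⟩ else F.max' hF + k
  have hpq : ∀ (k : ℕ) (h : k < N), p k = q ⟨k, h⟩ := fun k h => dif_pos h
  refine ⟨p, N - 1, strictMono_nat_of_lt_succ fun k => ?_, ?_, ?_, ?_⟩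
  · rcases lt_trichotomy (k + 1) N with h | h | h
    · rw [hpq k (by omega), hpq (k + 1) h]
      exact q.strictMono (Fin.mk_lt_mk.2 k.lt_succ_self)
    · rw [hpq k (by omega), show p (k + 1) = F.max' hF + (k + 1 : ℕ) from dif_neg (by omega)]
      have := F.le_max' _ (F.orderEmbOfFin_mem rfl ⟨k, by omega⟩)
      push_cast
      linarith [(k.cast_nonneg : (0 : ℝ) ≤ k)]
    · simp only [p, dif_neg (show ¬k < N by omega), dif_neg (show ¬k + 1 < N by omega)]
      push_cast
      linarith
  · ext x
    rw [← F.range_orderEmbOfFin rfl]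
    constructor
    · rintro ⟨k, hk, rfl⟩
      exact ⟨⟨k, by simp at hk; omega⟩, (hpq k _).symm⟩
    · rintro ⟨i, rfl⟩
      exact ⟨i, by simp; omega, hpq i i.2⟩
  · rw [hpq 0 hN]
    exact F.orderEmbOfFin_zero rfl hN
  · rw [hpq (N - 1) (by omega)]
    exact F.orderEmbOfFin_last rfl hN

theorem StrictMono.sub_eq_sum_indicator_mul_sub {p : ℕ → ℝ} (hp : StrictMono p) {m : ℕ}
    {a b : ℝ} (ha : a ∈ p '' Set.Iic m) (hb : b ∈ p '' Set.Iic m) (hab : a ≤ b) (f : ℝ → ℝ) :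
    f b - f a = ∑ k ∈ range m, (Set.Ico a b).indicator 1 (p k) * (f (p (k + 1)) - f (p k)) := by
  obtain ⟨i, -, rfl⟩ := ha
  obtain ⟨j, hj, rfl⟩ := hb
  have hmem : ∀ k, p k ∈ Set.Ico (p i) (p j) ↔ k ∈ Ico i j := by
    simp [hp.le_iff_le, hp.lt_iff_lt]
  have hsub : Ico i j ⊆ range m := fun k hk => by simp at hk hj ⊢; omega
  simp only [Set.indicator_apply, hmem, Pi.one_apply, ite_mul, one_mul, zero_mul]
  rw [sum_ite_mem, inter_eq_right.2 hsub, sum_Ico_sub (fun k => f (p k)) (hp.le_iff_le.1 hab)]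

theorem StrictMono.sum_mul_sub_eq_sum_mul_sub {p : ℕ → ℝ} (hp : StrictMono p) {m : ℕ}
    {ι : Type*} (s : Finset ι) (c a b : ι → ℝ) (ha : ∀ i ∈ s, a i ∈ p '' Set.Iic m)
    (hb : ∀ i ∈ s, b i ∈ p '' Set.Iic m) (hab : ∀ i ∈ s, a i ≤ b i) (f : ℝ → ℝ) :
    ∑ i ∈ s, c i * (f (b i) - f (a i)) = ∑ k ∈ range m,
      (∑ i ∈ s, c i * (Set.Ico (a i) (b i)).indicator 1 (p k)) * (f (p (k + 1)) - f (p k)) := by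
  rw [sum_congr rfl fun i hi => by
    rw [hp.sub_eq_sum_indicator_mul_sub (ha i hi) (hb i hi) (hab i hi) f, mul_sum], sum_comm]
  simp only [sum_mul, mul_assoc]

theorem integral_sum_mul_sum {Ω ι : Type*} [MeasurableSpace Ω] {P : Measure Ω}
    {e : ι → Ω → ℝ} (he : ∀ k, MemLp (e k) 2 P) (s : Finset ι) (α β : ι → ℝ) :
    ∫ ω, (∑ k ∈ s, α k * e k ω) * (∑ l ∈ s, β l * e l ω) ∂P
      = ∑ k ∈ s, ∑ l ∈ s, α k * β l * ∫ ω, e k ω * e l ω ∂P := by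
  have hint : ∀ k l, Integrable (fun ω => α k * β l * (e k ω * e l ω)) P :=
    fun k l => ((he k).integrable_mul (he l)).const_mul _
  have hexpand : ∀ ω, (∑ k ∈ s, α k * e k ω) * (∑ l ∈ s, β l * e l ω)
      = ∑ k ∈ s, ∑ l ∈ s, α k * β l * (e k ω * e l ω) := fun ω => by
    rw [sum_mul_sum]
    exact sum_congr rfl fun k _ => sum_congr rfl fun l _ => by ring
  simp_rw [hexpand]
  rw [integral_finsetSum _ fun k _ => integrable_finsetSum _ fun l _ => hint k l]
  refine sum_congr rfl fun k _ => ?_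
  rw [integral_finsetSum _ fun l _ => hint k l]
  simp_rw [integral_const_mul]

theorem Set.indicator_one_le_sq_sub_sum {α ι : Type*} {A : Set α} {B : ι → Set α}
    (u : Finset ι) (hAB : ∀ i ∈ u, Disjoint A (B i)) (c : ι → ℝ) (x : α) :
    A.indicator 1 x ≤ (A.indicator 1 x - ∑ i ∈ u, c i * (B i).indicator 1 x) ^ 2 := by
  by_cases hx : x ∈ A
  · have hB : ∀ i ∈ u, c i * (B i).indicator (1 : α → ℝ) x = 0 := fun i hi => by
      rw [Set.indicator_of_notMem (Set.disjoint_left.1 (hAB i hi) hx), mul_zero]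
    simp [hx, sum_eq_zero hB]
  · rw [Set.indicator_of_notMem hx]
    positivity

theorem integral_sum_mul_increment_le_integral_sq
    {Ω : Type*} [MeasurableSpace Ω] {P : Measure Ω} {T : ℝ} {X : ℝ → Ω → ℝ}
    (hX2 : ∀ t, MemLp (X t) 2 P)
    (hneg : ∀ a b c d : ℝ, 0 ≤ a → a ≤ b → b ≤ T → 0 ≤ c → c ≤ d → d ≤ T →
      (b ≤ c ∨ d ≤ a) → ∫ ω, (X b ω - X a ω) * (X d ω - X c ω) ∂P ≤ 0)
    (hpos : ∀ a b : ℝ, 0 ≤ a → a ≤ b → b ≤ T →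
      0 ≤ ∫ ω, (X b ω - X a ω) * (X T ω - X 0 ω) ∂P)
    {p : ℕ → ℝ} (hp : StrictMono p) {m : ℕ} (hp0 : p 0 = 0) (hpm : p m = T)
    {χ a : ℕ → ℝ} (hχa : ∀ k ∈ range m, χ k ≤ a k ^ 2) :
    ∫ ω, (∑ k ∈ range m, χ k * (X (p (k + 1)) ω - X (p k) ω)) * (X T ω - X 0 ω) ∂P
      ≤ ∫ ω, (∑ k ∈ range m, a k * (X (p (k + 1)) ω - X (p k) ω)) ^ 2 ∂P := by
  set e : ℕ → Ω → ℝ := fun k ω => X (p (k + 1)) ω - X (p k) ω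
  have he : ∀ k, MemLp (e k) 2 P := fun k => (hX2 _).sub (hX2 _)
  set G : ℕ → ℕ → ℝ := fun k l => ∫ ω, e k ω * e l ω ∂P
  have hW : ∀ ω, X T ω - X 0 ω = ∑ l ∈ range m, 1 * e l ω := fun ω => by
    simp only [one_mul, e]
    rw [sum_range_sub (fun k => X (p k) ω), hp0, hpm]
  have hbound : ∀ k ≤ m, 0 ≤ p k ∧ p k ≤ T := fun k hk =>
    ⟨hp0 ▸ hp.monotone k.zero_le, hpm ▸ hp.monotone hk⟩
  have hsymm : ∀ k l, G k l = G l k := fun k l => by simp only [G, mul_comm]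
  have hoff : ∀ k ∈ range m, ∀ l ∈ range m, k ≠ l → G k l ≤ 0 := by
    intro k hk l hl hkl
    simp only [mem_range] at hk hl
    refine hneg _ _ _ _ (hbound k hk.le).1 (hp.monotone k.le_succ) (hbound (k + 1) hk).2
      (hbound l hl.le).1 (hp.monotone l.le_succ) (hbound (l + 1) hl).2 ?_
    rcases hkl.lt_or_gt with h | h
    · exact Or.inl (hp.monotone h)
    · exact Or.inr (hp.monotone h)
  have hrow : ∀ k ∈ range m, 0 ≤ ∑ l ∈ range m, G k l := by
    intro k hk
    simp only [mem_range] at hk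
    have hr : ∑ l ∈ range m, G k l = ∫ ω, e k ω * (X T ω - X 0 ω) ∂P := by
      simp_rw [hW, one_mul, mul_sum]
      exact (integral_finsetSum _ fun l _ => (he k).integrable_mul (he l)).symm
    rw [hr]
    exact hpos _ _ (hbound k hk.le).1 (hp.monotone k.le_succ) (hbound (k + 1) hk).2
  calc ∫ ω, (∑ k ∈ range m, χ k * e k ω) * (X T ω - X 0 ω) ∂P
        = ∑ k ∈ range m, ∑ l ∈ range m, χ k * G k l := by
        simp_rw [hW, integral_sum_mul_sum he, mul_one]
        rfl
    _ ≤ ∑ k ∈ range m, ∑ l ∈ range m, a k * a l * G k l :=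
        sum_sum_mul_le_sum_sum_mul_mul_of_le_sq _ hsymm hoff hrow hχa
    _ = _ := by
        rw [← integral_sum_mul_sum he]
        simp_rw [sq]
        rfl

theorem stmt13_general
    (T : ℝ)
    {Ω : Type*} [MeasurableSpace Ω] (P : Measure Ω)
    (X : ℝ → Ω → ℝ)
    (hX2 : ∀ t, MemLp (X t) 2 P)
    -- non-positively correlated increments over disjoint intervals
    (hneg : ∀ a b c d : ℝ, 0 ≤ a → a ≤ b → b ≤ T → 0 ≤ c → c ≤ d → d ≤ T →
      (b ≤ c ∨ d ≤ a) → ∫ ω, (X b ω - X a ω) * (X d ω - X c ω) ∂P ≤ 0)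
    (hpos : ∀ a b : ℝ, 0 ≤ a → a ≤ b → b ≤ T →
      0 ≤ ∫ ω, (X b ω - X a ω) * (X T ω - X 0 ω) ∂P) :
    ∀ s t : ℝ, 0 ≤ s → s ≤ t → t ≤ T →
      ∀ (n : ℕ) (c : Fin n → ℝ) (t₀ t₁ : Fin n → ℝ),
        (∀ i, 0 ≤ t₀ i ∧ t₀ i ≤ t₁ i ∧ t₁ i ≤ T ∧ (t₁ i ≤ s ∨ t ≤ t₀ i)) →
        ∫ ω, (X t ω - X s ω) * (X T ω - X 0 ω) ∂P
          ≤ ∫ ω, (X t ω - X s ω - ∑ i, c i * (X (t₁ i) ω - X (t₀ i) ω)) ^ 2 ∂P := by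
  intro s t hs hst htT n c t₀ t₁ hint
  set F : Finset ℝ := {0, s, t, T} ∪ univ.image t₀ ∪ univ.image t₁
  have hFI : ∀ x ∈ F, 0 ≤ x ∧ x ≤ T := by
    simp only [F, mem_union, mem_insert, mem_singleton, mem_image, mem_univ, true_and]
    rintro x (((rfl | rfl | rfl | rfl) | ⟨i, rfl⟩) | ⟨i, rfl⟩)
    iterate 4 exact ⟨by linarith, by linarith⟩
    · exact ⟨(hint i).1, (hint i).2.1.trans (hint i).2.2.1⟩
    · exact ⟨(hint i).1.trans (hint i).2.1, (hint i).2.2.1⟩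
  have hF : F.Nonempty := ⟨0, by simp [F]⟩
  obtain ⟨p, m, hp, hpF, hp0, hpm⟩ := F.exists_strictMono_image_Iic_eq hF
  have hmem : ∀ x ∈ F, x ∈ p '' Set.Iic m := fun x hx => hpF ▸ hx
  have hmin : F.min' hF = 0 := le_antisymm (F.min'_le 0 (by simp [F])) (hFI _ (F.min'_mem hF)).1
  have hmax : F.max' hF = T := le_antisymm (hFI _ (F.max'_mem hF)).2 (F.le_max' T (by simp [F]))
  have hdisj : ∀ i ∈ univ, Disjoint (Set.Ico s t) (Set.Ico (t₀ i) (t₁ i)) := fun i _ =>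
    Set.disjoint_left.2 fun x ⟨_, _⟩ ⟨_, _⟩ => by rcases (hint i).2.2.2 with h | h <;> linarith
  have hZ : ∀ ω, X t ω - X s ω = ∑ k ∈ range m,
      (Set.Ico s t).indicator 1 (p k) * (X (p (k + 1)) ω - X (p k) ω) :=
    fun ω => hp.sub_eq_sum_indicator_mul_sub (hmem s (by simp [F])) (hmem t (by simp [F])) hst
      (X · ω)
  have hZY : ∀ ω, X t ω - X s ω - ∑ i, c i * (X (t₁ i) ω - X (t₀ i) ω)
      = ∑ k ∈ range m, ((Set.Ico s t).indicator 1 (p k)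
          - ∑ i, c i * (Set.Ico (t₀ i) (t₁ i)).indicator 1 (p k)) * (X (p (k + 1)) ω - X (p k) ω) :=
      fun ω => by
    rw [hZ, hp.sum_mul_sub_eq_sum_mul_sub univ c t₀ t₁ (fun i _ => hmem _ (by simp [F]))
      (fun i _ => hmem _ (by simp [F])) (fun i _ => (hint i).2.1) (X · ω), ← sum_sub_distrib]
    simp only [sub_mul]
  simp_rw [hZY, hZ]
  exact integral_sum_mul_increment_le_integral_sq hX2 hneg hpos hp (hp0.trans hmin)
    (hpm.trans hmax) fun k _ => Set.indicator_one_le_sq_sub_sum univ hdisj c (p k)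

/-- For a centered Gaussian process with non-positively correlated increments and
`E[X_{a,b}X_{0,T}] ≥ 0`, every approximation `Y` of `X_{s,t}` by linear combinations of
increments over intervals disjoint from `(s,t)` satisfies
`E[|X_{s,t} - Y|²] ≥ E[X_{s,t}X_{0,T}]`. -/
theorem stmt13
    (T : ℝ) (hT : 0 < T)
    {Ω : Type*} [MeasurableSpace Ω] (P : Measure Ω) [IsProbabilityMeasure P]
    (X : ℝ → Ω → ℝ)
    (hX2 : ∀ t, MemLp (X t) 2 P)
    (hcent : ∀ t, ∫ ω, X t ω ∂P = 0)
    (hGauss : ∀ (n : ℕ) (c : Fin n → ℝ) (τ : Fin n → ℝ),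
      ∃ v : NNReal, Measure.map (fun ω => ∑ i, c i * X (τ i) ω) P = gaussianReal 0 v)
    -- non-positively correlated increments over disjoint intervals
    (hneg : ∀ a b c d : ℝ, 0 ≤ a → a ≤ b → b ≤ T → 0 ≤ c → c ≤ d → d ≤ T →
      (b ≤ c ∨ d ≤ a) → ∫ ω, (X b ω - X a ω) * (X d ω - X c ω) ∂P ≤ 0)
    (hpos : ∀ a b : ℝ, 0 ≤ a → a ≤ b → b ≤ T →
      0 ≤ ∫ ω, (X b ω - X a ω) * (X T ω - X 0 ω) ∂P) :
    ∀ s t : ℝ, 0 ≤ s → s ≤ t → t ≤ T →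
      ∀ (n : ℕ) (c : Fin n → ℝ) (t₀ t₁ : Fin n → ℝ),
        (∀ i, 0 ≤ t₀ i ∧ t₀ i ≤ t₁ i ∧ t₁ i ≤ T ∧ (t₁ i ≤ s ∨ t ≤ t₀ i)) →
        ∫ ω, (X t ω - X s ω) * (X T ω - X 0 ω) ∂P
          ≤ ∫ ω, (X t ω - X s ω - ∑ i, c i * (X (t₁ i) ω - X (t₀ i) ω)) ^ 2 ∂P :=
  stmt13_general T P X hX2 hneg hpos
end
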